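/- arXiv:2510.25226 — 4 statements merged into one kernel-verified Lean document; each statement's English description precedes it below -/
import Mathlib

section
/- Let X be a measurable space, μ_P, μ_N probability measures on X, π ∈ [0,1], and let μ_U = π • μ_P + (1 − π) • μ_N be the mixture measure. Let f : X → ℝ be measurable and let ℓ : ℝ → ℝ be a bounded measurable loss satisfying the constant-sum property ℓ(z) + ℓ(−z) = C for all z ∈ ℝ. Then the positive–negative risk can be rewritten using only positive and unlabeled expectations: π ∫ ℓ(f(x)) dμ_P(x) + (1 − π) ∫ ℓ(−f(x)) dμ_N(x) = 2π ∫ ℓ(f(x)) dμ_P(x) − ∫ ℓ(f(x)) dμ_U(x) + (1 − π) C. -/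
open MeasureTheory

/- The constant-sum property turns the negative risk `∫ ℓ(-f) dμ_N` into `C - ∫ ℓ(f) dμ_N`, and
linearity of the integral in the measure writes `∫ ℓ(f) dμ_U` as `π ∫ ℓ(f) dμ_P + (1 - π) ∫ ℓ(f) dμ_N`;
eliminating `∫ ℓ(f) dμ_N` between the two gives the identity. -/

section

variable {α : Type*} [MeasurableSpace α]

theorem integral_eq_sub_of_add_eq_const {μ : Measure α} [IsProbabilityMeasure μ] {g h : α → ℝ}
    {C : ℝ} (hg : Integrable g μ) (hgh : ∀ x, g x + h x = C) :
    ∫ x, h x ∂μ = C - ∫ x, g x ∂μ := by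
  have h_eq : h = fun x => C - g x := funext fun x => by linarith [hgh x]
  rw [h_eq, integral_sub (integrable_const C) hg, integral_const, probReal_univ, one_smul]

theorem integral_ofReal_smul_add_ofReal_smul {G : Type*} [NormedAddCommGroup G] [NormedSpace ℝ G]
    {μ ν : Measure α} {a b : ℝ} (ha : 0 ≤ a) (hb : 0 ≤ b) {g : α → G}
    (hμ : Integrable g μ) (hν : Integrable g ν) :
    ∫ x, g x ∂(ENNReal.ofReal a • μ + ENNReal.ofReal b • ν) =
      a • ∫ x, g x ∂μ + b • ∫ x, g x ∂ν := by
  rw [integral_add_measure (hμ.smul_measure ENNReal.ofReal_ne_top)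
      (hν.smul_measure ENNReal.ofReal_ne_top),
    integral_smul_measure, integral_smul_measure, ENNReal.toReal_ofReal ha,
    ENNReal.toReal_ofReal hb]

end

/-- PU risk rewriting: if `μ_U = π • μ_P + (1 - π) • μ_N` and the bounded measurable
loss `ℓ` satisfies the constant-sum property `ℓ(z) + ℓ(-z) = C`, then the
positive–negative risk equals `2π E_P[ℓ(f)] − E_U[ℓ(f)] + (1 − π) C`. -/
theorem pu_risk_rewrite
    {X : Type*} [MeasurableSpace X]
    (μP μN : Measure X) [IsProbabilityMeasure μP] [IsProbabilityMeasure μN]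
    (π : ℝ) (hπ0 : 0 ≤ π) (hπ1 : π ≤ 1)
    (μU : Measure X)
    (hμU : μU = ENNReal.ofReal π • μP + ENNReal.ofReal (1 - π) • μN)
    (f : X → ℝ) (hf : Measurable f)
    (ℓ : ℝ → ℝ) (hℓ : Measurable ℓ) (B : ℝ) (hB : ∀ z : ℝ, |ℓ z| ≤ B)
    (C : ℝ) (hsum : ∀ z : ℝ, ℓ z + ℓ (-z) = C) :
    π * ∫ x, ℓ (f x) ∂μP + (1 - π) * ∫ x, ℓ (-f x) ∂μN =
      2 * π * ∫ x, ℓ (f x) ∂μP - ∫ x, ℓ (f x) ∂μU + (1 - π) * C := by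
  have h_int : ∀ (μ : Measure X) [IsFiniteMeasure μ], Integrable (fun x => ℓ (f x)) μ :=
    fun _ _ => .of_bound (hℓ.comp hf).aestronglyMeasurable B (.of_forall fun x => hB (f x))
  have h_neg : ∫ x, ℓ (-f x) ∂μN = C - ∫ x, ℓ (f x) ∂μN :=
    integral_eq_sub_of_add_eq_const (h_int μN) fun x => hsum (f x)
  rw [h_neg, hμU,
    integral_ofReal_smul_add_ofReal_smul hπ0 (sub_nonneg.2 hπ1) (h_int μP) (h_int μN),
    smul_eq_mul, smul_eq_mul]
  ring
end

section
/- Let X be an integrable real-valued random variable with E[X] = r where r > 0, and suppose B ≥ 0 satisfies |X(ω)| + |X(ω) − r| ≤ B for almost every ω in the event {max(X, 0) < r}. Then the bias of the ReLU-corrected estimator satisfies E[max(X, 0)] − r ≤ B · P(max(X, 0) < r). -/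
open MeasureTheory

/-- Bias bound for the ReLU-corrected risk estimator: if `X` is an integrable random
variable with mean `r > 0`, and `B ≥ 0` dominates `|X| + |X − r|` almost everywhere on
the downward-deviation event `{max(X,0) < r}`, then
`E[max(X, 0)] − r ≤ B · P(max(X,0) < r)`. -/
theorem relu_corrected_bias_bound
    {Ω : Type*} [MeasurableSpace Ω] (μ : Measure Ω) [IsProbabilityMeasure μ]
    (X : Ω → ℝ) (hX : Integrable X μ)
    (r : ℝ) (hr : 0 < r) (hmean : ∫ ω, X ω ∂μ = r)
    (B : ℝ) (hB : 0 ≤ B)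
    (hdom : ∀ᵐ ω ∂μ, max (X ω) 0 < r → |X ω| + |X ω - r| ≤ B) :
    (∫ ω, max (X ω) 0 ∂μ) - r ≤ B * (μ {ω | max (X ω) 0 < r}).toReal := by
  set A := {ω | max (X ω) 0 < r} with hAdef
  have hmaxInt : Integrable (fun ω => max (X ω) 0) μ := hX.pos_part
  have hA : NullMeasurableSet A μ := by
    have h : AEMeasurable (fun ω => max (X ω) 0) μ :=
      hX.aemeasurable.max aemeasurable_const
    exact h.nullMeasurable measurableSet_Iio
  obtain ⟨t, htsub, htm, hteq⟩ := hA.exists_measurable_subset_ae_eq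
  have hμ : μ t = μ A := measure_congr hteq
  have hg : Integrable (t.indicator fun _ => B) μ := (integrable_const B).indicator htm
  have hmem : ∀ᵐ ω ∂μ, ω ∈ t ↔ ω ∈ A := Filter.eventuallyEq_set.mp hteq
  have hle : ∀ᵐ ω ∂μ, (max (X ω) 0 - X ω) ≤ t.indicator (fun _ => B) ω := by
    filter_upwards [hdom, hmem] with ω hd hm
    by_cases hω : max (X ω) 0 < r
    · have hωt : ω ∈ t := hm.mpr hω
      rw [Set.indicator_of_mem hωt]
      have hBb := hd hω
      have h1 : |X ω| ≤ B := le_trans (le_add_of_nonneg_right (abs_nonneg _)) hBb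
      rcases le_or_gt (X ω) 0 with h0 | h0
      · rw [max_eq_right h0]
        have : -X ω ≤ |X ω| := neg_le_abs _
        linarith
      · rw [max_eq_left h0.le]; linarith
    · have hωt : ω ∉ t := fun h => hω (hm.mp h)
      rw [Set.indicator_of_notMem hωt]
      have : 0 < max (X ω) 0 := lt_of_lt_of_le hr (not_lt.mp hω)
      have hx : 0 ≤ X ω := by
        by_contra hc
        push_neg at hc
        rw [max_eq_right hc.le] at this
        exact lt_irrefl _ this
      rw [max_eq_left hx]
      simp
  calc (∫ ω, max (X ω) 0 ∂μ) - r
      = ∫ ω, (max (X ω) 0 - X ω) ∂μ := by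
        rw [integral_sub hmaxInt hX, hmean]
    _ ≤ ∫ ω, t.indicator (fun _ => B) ω ∂μ :=
        integral_mono_ae (hmaxInt.sub hX) hg hle
    _ = B * (μ A).toReal := by
        rw [integral_indicator_const B htm, measureReal_def, hμ, smul_eq_mul, mul_comm]
end

section
/- Fix k ≥ 2, positive integers n_1, …, n_k, reals π_1, …, π_{k−1} ≥ 0, C > 0, and a real constant c. On a probability space, let {A_{i,j} : 1 ≤ i ≤ k−1, 1 ≤ j ≤ n_i} ∪ {B_j : 1 ≤ j ≤ n_k} be jointly independent real random variables, each taking values in [0, C] almost surely, and define Y = Σ_{i=1}^{k−1} (2π_i / n_i) Σ_{j=1}^{n_i} A_{i,j} + (1/n_k) Σ_{j=1}^{n_k} B_j − c. Then for every δ ∈ (0,1), with probability at least 1 − δ, E[Y] ≤ max(Y, 0) + C √( (1/2) ( 4 Σ_{i=1}^{k−1} π_i²/n_i + 1/n_k ) · log(1/δ) ). -/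
open MeasureTheory ProbabilityTheory

/-!
`E[Y] - Y` is a sum of independent centred variables, the one indexed by a sample being confined
to an interval of length `w C`, where `w` is its weight (`2 π_i / n_i` or `1 / n_k`). Hoeffding's
inequality bounds the probability that it reaches `ε` by `exp (-2 ε² / (C² Σ w²))`, and
`Σ w² = 4 Σ π_i² / n_i + 1 / n_k`, so the stated `ε` makes this bound `δ`. Finally `Y ≤ max Y 0`.
-/

section

open Real

variable {Ω ι : Type*} [MeasurableSpace Ω] {μ : Measure Ω} [IsProbabilityMeasure μ] [Fintype ι]

lemma measureReal_le_sum_integral_sub_le {X : ι → Ω → ℝ} (hindep : iIndepFun X μ)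
    (hmeas : ∀ i, AEMeasurable (X i) μ) {a b : ι → ℝ}
    (hX : ∀ i, ∀ᵐ ω ∂μ, X i ω ∈ Set.Icc (a i) (b i)) {ε : ℝ} (hε : 0 ≤ ε) :
    μ.real {ω | ε ≤ ∑ i, (μ[X i] - X i ω)} ≤ exp (-2 * ε ^ 2 / ∑ i, (b i - a i) ^ 2) := by
  have hsubG (i : ι) : HasSubgaussianMGF (fun ω ↦ μ[X i] - X i ω) ((‖b i - a i‖₊ / 2) ^ 2) μ :=
    ((hasSubgaussianMGF_of_mem_Icc (hmeas i) (hX i)).neg).congr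
      (ae_of_all _ fun ω ↦ by simp)
  have hindep' : iIndepFun (fun i ↦ (fun x ↦ μ[X i] - x) ∘ X i) μ :=
    hindep.comp (fun i x ↦ μ[X i] - x) fun i ↦ by fun_prop
  refine (HasSubgaussianMGF.measure_sum_ge_le_of_iIndepFun hindep' (fun i _ ↦ hsubG i)
    hε).trans_eq ?_
  congr 1
  push_cast
  simp only [div_pow, norm_eq_abs, sq_abs, ← Finset.sum_div]
  field_simp

lemma ofReal_one_sub_le_measure_compl {s : Set Ω} {δ : ℝ} (h : μ.real s ≤ δ) :
    ENNReal.ofReal (1 - δ) ≤ μ sᶜ := by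
  have hs : μ s ≤ ENNReal.ofReal δ := by
    rw [← ofReal_measureReal]; exact ENNReal.ofReal_le_ofReal h
  calc ENNReal.ofReal (1 - δ) ≤ 1 - ENNReal.ofReal δ := by
        rw [← ENNReal.ofReal_one, ENNReal.ofReal_sub _ (measureReal_nonneg.trans h)]
    _ ≤ 1 - μ s := tsub_le_tsub_left hs 1
    _ ≤ μ sᶜ := by
        rw [tsub_le_iff_left, ← measure_univ (μ := μ), ← Set.union_compl_self s]
        exact measure_union_le s sᶜ

lemma ofReal_one_sub_le_measure_sum_integral_le {W : ι → Ω → ℝ} (hindep : iIndepFun W μ)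
    (hmeas : ∀ i, AEMeasurable (W i) μ) {C : ℝ} (hC : 0 < C)
    (hW : ∀ i, ∀ᵐ ω ∂μ, W i ω ∈ Set.Icc 0 C) {w : ι → ℝ} (hw : ∀ i, 0 ≤ w i)
    (hw_sq : 0 < ∑ i, w i ^ 2) {δ : ℝ} (hδ₀ : 0 < δ) (hδ₁ : δ ≤ 1) :
    ENNReal.ofReal (1 - δ) ≤ μ {ω | ∑ i, w i * μ[W i] ≤
      ∑ i, w i * W i ω + C * √((1 / 2) * (∑ i, w i ^ 2) * log (1 / δ))} := by
  set ε := C * √((1 / 2) * (∑ i, w i ^ 2) * log (1 / δ))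
  have hL : 0 ≤ log (1 / δ) := log_nonneg ((one_le_div hδ₀).2 hδ₁)
  have hε_sq : ε ^ 2 = C ^ 2 * ((1 / 2) * (∑ i, w i ^ 2) * log (1 / δ)) := by
    rw [mul_pow, sq_sqrt (by positivity)]
  have hexp : exp (-2 * ε ^ 2 / ∑ i, (w i * C - 0) ^ 2) = δ := by
    have hsum : ∑ i, (w i * C - 0) ^ 2 = C ^ 2 * ∑ i, w i ^ 2 := by
      simp only [sub_zero, mul_pow, Finset.mul_sum, mul_comm]
    rw [hsum, hε_sq]
    field_simp
    rw [← log_inv, one_div, inv_inv, exp_log hδ₀]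
  have htail := measureReal_le_sum_integral_sub_le (X := fun i ω ↦ w i * W i ω)
    (hindep.comp (fun i x ↦ w i * x) fun i ↦ by fun_prop) (fun i ↦ (hmeas i).const_mul _)
    (a := fun _ ↦ 0) (b := fun i ↦ w i * C) (ε := ε)
    (fun i ↦ by
      filter_upwards [hW i] with ω hω
      exact ⟨mul_nonneg (hw i) hω.1, mul_le_mul_of_nonneg_left hω.2 (hw i)⟩)
    (by positivity)
  refine (ofReal_one_sub_le_measure_compl (htail.trans_eq hexp)).trans (measure_mono fun ω hω ↦ ?_)
  simp only [Set.mem_compl_iff, Set.mem_ofPred_eq, not_le, integral_const_mul,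
    Finset.sum_sub_distrib] at hω ⊢
  linarith
end

section

variable {κ : Type*} (n : κ → ℕ) (nk : ℕ) (π : κ → ℝ)

noncomputable def riskWeight : (Σ i, Fin (n i)) ⊕ Fin nk → ℝ :=
  Sum.elim (fun s ↦ 2 * π s.1 / n s.1) fun _ ↦ 1 / nk

variable {n nk π}

lemma riskWeight_nonneg (hπ : ∀ i, 0 ≤ π i) (idx : (Σ i, Fin (n i)) ⊕ Fin nk) :
    0 ≤ riskWeight n nk π idx := by
  rcases idx with s | j
  · exact div_nonneg (mul_nonneg zero_le_two (hπ s.1)) (Nat.cast_nonneg _)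
  · exact div_nonneg zero_le_one (Nat.cast_nonneg _)

variable [Fintype κ]

lemma sum_riskWeight_mul (f : (Σ i, Fin (n i)) ⊕ Fin nk → ℝ) :
    ∑ idx, riskWeight n nk π idx * f idx =
      ∑ i, 2 * π i / n i * ∑ j, f (.inl ⟨i, j⟩) + 1 / nk * ∑ j, f (.inr j) := by
  simp only [riskWeight, Fintype.sum_sum_type, Fintype.sum_sigma, Finset.mul_sum, Sum.elim_inl,
    Sum.elim_inr]

lemma sum_riskWeight_sq :
    ∑ idx, riskWeight n nk π idx ^ 2 = 4 * ∑ i, π i ^ 2 / n i + 1 / nk := by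
  have hmul_sq (m x : ℝ) : m * (x / m) ^ 2 = x ^ 2 / m := by
    rcases eq_or_ne m 0 with rfl | hm <;> field_simp
  simp only [riskWeight, Fintype.sum_sum_type, Fintype.sum_sigma, Sum.elim_inl, Sum.elim_inr,
    Finset.sum_const, Finset.card_univ, Fintype.card_fin, nsmul_eq_mul, hmul_sq]
  simp only [mul_pow, mul_div_assoc, ← Finset.mul_sum]
  norm_num

end

theorem csmpu_corrected_risk_bound_general
    {Ω : Type*} [MeasurableSpace Ω] (μ : Measure Ω) [IsProbabilityMeasure μ]
    (k : ℕ)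
    (n : Fin (k - 1) → ℕ) (nk : ℕ) (hnk : 0 < nk)
    (π : Fin (k - 1) → ℝ) (hπ : ∀ i, 0 ≤ π i)
    (C : ℝ) (hC : 0 < C) (c : ℝ)
    (W : ((Σ i : Fin (k - 1), Fin (n i)) ⊕ Fin nk) → Ω → ℝ)
    (hWmeas : ∀ idx, Measurable (W idx))
    (hWindep : iIndepFun W μ)
    (hWrange : ∀ idx, ∀ᵐ ω ∂μ, W idx ω ∈ Set.Icc 0 C)
    (Y : Ω → ℝ)
    (hY : Y = fun ω =>
      (∑ i : Fin (k - 1), (2 * π i / (n i : ℝ)) * ∑ j : Fin (n i), W (Sum.inl ⟨i, j⟩) ω)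
        + (1 / (nk : ℝ)) * ∑ j : Fin nk, W (Sum.inr j) ω - c) :
    ∀ δ : ℝ, δ ∈ Set.Ioo (0 : ℝ) 1 →
      ENNReal.ofReal (1 - δ) ≤
        μ {ω | (∫ ω', Y ω' ∂μ) ≤ max (Y ω) 0 +
            C * Real.sqrt ((1 / 2) *
              (4 * (∑ i : Fin (k - 1), π i ^ 2 / (n i : ℝ)) + 1 / (nk : ℝ)) *
              Real.log (1 / δ))} := by
  rintro δ ⟨hδ₀, hδ₁⟩
  set w := riskWeight n nk π
  have hY_eq : Y = fun ω ↦ ∑ idx, w idx * W idx ω - c := by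
    simp only [hY, w, sum_riskWeight_mul]
  have hEY : ∫ ω, Y ω ∂μ = ∑ idx, w idx * μ[W idx] - c := by
    have hint idx : Integrable (fun ω ↦ w idx * W idx ω) μ :=
      (Integrable.of_mem_Icc 0 C (hWmeas idx).aemeasurable (hWrange idx)).const_mul _
    rw [hY_eq, integral_sub (integrable_finsetSum _ fun idx _ ↦ hint idx) (integrable_const c),
      integral_finsetSum _ fun idx _ ↦ hint idx]
    simp [integral_const_mul]
  have hw_sq_pos : 0 < ∑ idx, w idx ^ 2 := by
    rw [sum_riskWeight_sq]
    positivity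
  refine (ofReal_one_sub_le_measure_sum_integral_le hWindep (fun idx ↦ (hWmeas idx).aemeasurable)
    hC hWrange (riskWeight_nonneg hπ) hw_sq_pos hδ₀ hδ₁.le).trans (measure_mono fun ω hω ↦ ?_)
  simp only [Set.mem_ofPred_eq, hEY, sum_riskWeight_sq] at hω ⊢
  rw [hY_eq]
  linarith [le_max_left (∑ idx, w idx * W idx ω - c) 0]

/-- High-probability bound for the population risk in terms of the ReLU-corrected
CSMPU empirical risk.  With `Y = Σ_i (2π_i/n_i) Σ_j A_{i,j} + (1/n_k) Σ_j B_j − c`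
built from jointly independent `[0, C]`-valued per-sample losses, for every
`δ ∈ (0,1)`, with probability at least `1 − δ`,
`E[Y] ≤ max(Y, 0) + C √((1/2)(4 Σ_i π_i²/n_i + 1/n_k) log(1/δ))`. -/
theorem csmpu_corrected_risk_bound
    {Ω : Type*} [MeasurableSpace Ω] (μ : Measure Ω) [IsProbabilityMeasure μ]
    (k : ℕ) (hk : 2 ≤ k)
    (n : Fin (k - 1) → ℕ) (hn : ∀ i, 0 < n i) (nk : ℕ) (hnk : 0 < nk)
    (π : Fin (k - 1) → ℝ) (hπ : ∀ i, 0 ≤ π i)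
    (C : ℝ) (hC : 0 < C) (c : ℝ)
    (W : ((Σ i : Fin (k - 1), Fin (n i)) ⊕ Fin nk) → Ω → ℝ)
    (hWmeas : ∀ idx, Measurable (W idx))
    (hWindep : iIndepFun W μ)
    (hWrange : ∀ idx, ∀ᵐ ω ∂μ, W idx ω ∈ Set.Icc 0 C)
    (Y : Ω → ℝ)
    (hY : Y = fun ω =>
      (∑ i : Fin (k - 1), (2 * π i / (n i : ℝ)) * ∑ j : Fin (n i), W (Sum.inl ⟨i, j⟩) ω)
        + (1 / (nk : ℝ)) * ∑ j : Fin nk, W (Sum.inr j) ω - c) :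
    ∀ δ : ℝ, δ ∈ Set.Ioo (0 : ℝ) 1 →
      ENNReal.ofReal (1 - δ) ≤
        μ {ω | (∫ ω', Y ω' ∂μ) ≤ max (Y ω) 0 +
            C * Real.sqrt ((1 / 2) *
              (4 * (∑ i : Fin (k - 1), π i ^ 2 / (n i : ℝ)) + 1 / (nk : ℝ)) *
              Real.log (1 / δ))} :=
  csmpu_corrected_risk_bound_general μ k n nk hnk π hπ C hC c W hWmeas hWindep hWrange Y hY
end

section
/- Let X be a measurable space, μ_P and μ_N probability measures on X, π ∈ [0,1], μ_U = π • μ_P + (1 − π) • μ_N, f : X → ℝ measurable, and ℓ : ℝ → ℝ a bounded measurable loss with the constant-sum property ℓ(z) + ℓ(−z) = C for all z ∈ ℝ. Suppose X_1, …, X_m are i.i.d. random variables with law μ_P and Z_1, …, Z_n are i.i.d. random variables with law μ_U, and define the PU empirical risk R̂ = 2π · (1/m) Σ_{j=1}^m ℓ(f(X_j)) − (1/n) Σ_{j=1}^n ℓ(f(Z_j)) + (1 − π) C. Then R̂ is an unbiased estimator of the positive–negative risk: E[R̂] = π ∫ ℓ(f(x)) dμ_P(x) + (1 − π) ∫ ℓ(−f(x))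 dμ_N(x). -/
/-! Every sample has the law of its population, so by linearity of expectation
`E[R̂] = 2π E_P[ℓ(f)] − E_U[ℓ(f)] + (1 − π) C`.
Splitting `E_U = π E_P + (1 − π) E_N` along the mixture and using the constant-sum
property `E_N[ℓ(f)] = C − E_N[ℓ(−f)]` turns this into the positive–negative risk. -/

open MeasureTheory ProbabilityTheory

section

variable {X Ω : Type*} [MeasurableSpace X] [MeasurableSpace Ω]

theorem integrable_comp_of_abs_le (μ : Measure X) [IsFiniteMeasure μ] {ℓ : ℝ → ℝ}
    (hℓ : Measurable ℓ) {B : ℝ} (hB : ∀ z, |ℓ z| ≤ B) {f : X → ℝ} (hf : Measurable f) :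
    Integrable (fun x => ℓ (f x)) μ :=
  Integrable.of_bound (hℓ.comp hf).aestronglyMeasurable B (ae_of_all _ fun x => hB (f x))

theorem integral_smul_add_smul_measure {μ ν : Measure X} {a b : ℝ} (ha : 0 ≤ a) (hb : 0 ≤ b)
    {g : X → ℝ} (hμ : Integrable g μ) (hν : Integrable g ν) :
    ∫ x, g x ∂(ENNReal.ofReal a • μ + ENNReal.ofReal b • ν) =
      a * ∫ x, g x ∂μ + b * ∫ x, g x ∂ν := by
  rw [integral_add_measure (hμ.smul_measure ENNReal.ofReal_ne_top)
      (hν.smul_measure ENNReal.ofReal_ne_top), integral_smul_measure, integral_smul_measure,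
    ENNReal.toReal_ofReal ha, ENNReal.toReal_ofReal hb, smul_eq_mul, smul_eq_mul]

theorem integral_comp_eq_sub_integral_comp_neg (μ : Measure X) [IsProbabilityMeasure μ]
    {ℓ : ℝ → ℝ} {C : ℝ} (hsum : ∀ z, ℓ z + ℓ (-z) = C) {f : X → ℝ}
    (hneg : Integrable (fun x => ℓ (-f x)) μ) :
    ∫ x, ℓ (f x) ∂μ = C - ∫ x, ℓ (-f x) ∂μ := by
  have hpos : (fun x => ℓ (f x)) = fun x => C - ℓ (-f x) :=
    funext fun x => eq_sub_of_add_eq (hsum (f x))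
  rw [hpos, integral_sub (integrable_const C) hneg, integral_const, probReal_univ, one_smul]

variable {P : Measure Ω} {μ : Measure X} {m : ℕ} {Y : Fin m → Ω → X} {g : X → ℝ}

theorem integrable_comp_of_map_eq (hY : ∀ j, AEMeasurable (Y j) P)
    (hlaw : ∀ j, P.map (Y j) = μ) (hg : Integrable g μ) (j : Fin m) :
    Integrable (fun ω => g (Y j ω)) P :=
  ((hlaw j).symm ▸ hg).comp_aemeasurable (hY j)

theorem integrable_empiricalMean_of_map_eq (hY : ∀ j, AEMeasurable (Y j) P)
    (hlaw : ∀ j, P.map (Y j) = μ) (hg : Integrable g μ) :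
    Integrable (fun ω => (1 / (m : ℝ)) * ∑ j, g (Y j ω)) P :=
  (integrable_finsetSum _ fun j _ => integrable_comp_of_map_eq hY hlaw hg j).const_mul _

theorem integral_empiricalMean_of_map_eq (hm : 0 < m) (hY : ∀ j, AEMeasurable (Y j) P)
    (hlaw : ∀ j, P.map (Y j) = μ) (hg : Integrable g μ) :
    ∫ ω, (1 / (m : ℝ)) * ∑ j, g (Y j ω) ∂P = ∫ x, g x ∂μ := by
  have hsample : ∀ j, ∫ ω, g (Y j ω) ∂P = ∫ x, g x ∂μ := fun j => by
    rw [← hlaw j, integral_map (hY j) ((hlaw j).symm ▸ hg.aestronglyMeasurable)]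
  rw [integral_const_mul,
    integral_finsetSum _ fun j _ => integrable_comp_of_map_eq hY hlaw hg j]
  simp only [hsample, Finset.sum_const, Finset.card_univ, Fintype.card_fin, nsmul_eq_mul]
  field_simp

end

theorem pu_empirical_risk_unbiased_general
    {X : Type*} [MeasurableSpace X]
    (μP μN : Measure X) [IsProbabilityMeasure μP] [IsProbabilityMeasure μN]
    (π : ℝ) (hπ0 : 0 ≤ π) (hπ1 : π ≤ 1)
    (μU : Measure X)
    (hμU : μU = ENNReal.ofReal π • μP + ENNReal.ofReal (1 - π) • μN)
    (f : X → ℝ) (hf : Measurable f)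
    (ℓ : ℝ → ℝ) (hℓ : Measurable ℓ) (B : ℝ) (hB : ∀ z : ℝ, |ℓ z| ≤ B)
    (C : ℝ) (hsum : ∀ z : ℝ, ℓ z + ℓ (-z) = C)
    {Ω : Type*} [MeasurableSpace Ω] (P : Measure Ω) [IsProbabilityMeasure P]
    (m n : ℕ) (hm : 0 < m) (hn : 0 < n)
    (Xs : Fin m → Ω → X) (Zs : Fin n → Ω → X)
    (hXmeas : ∀ j, Measurable (Xs j)) (hZmeas : ∀ j, Measurable (Zs j))
    (hXlaw : ∀ j, Measure.map (Xs j) P = μP)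
    (hZlaw : ∀ j, Measure.map (Zs j) P = μU)
    (Rhat : Ω → ℝ)
    (hRhat : Rhat = fun ω =>
      2 * π * ((1 / (m : ℝ)) * ∑ j : Fin m, ℓ (f (Xs j ω)))
        - (1 / (n : ℝ)) * ∑ j : Fin n, ℓ (f (Zs j ω)) + (1 - π) * C) :
    ∫ ω, Rhat ω ∂P =
      π * ∫ x, ℓ (f x) ∂μP + (1 - π) * ∫ x, ℓ (-f x) ∂μN := by
  have hπ1' : 0 ≤ 1 - π := sub_nonneg.mpr hπ1
  have hIP := integrable_comp_of_abs_le μP hℓ hB hf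
  have hIN := integrable_comp_of_abs_le μN hℓ hB hf
  have hIU : Integrable (fun x => ℓ (f x)) μU := hμU ▸
    (hIP.smul_measure ENNReal.ofReal_ne_top).add_measure (hIN.smul_measure ENNReal.ofReal_ne_top)
  have hXae := fun j => (hXmeas j).aemeasurable (μ := P)
  have hZae := fun j => (hZmeas j).aemeasurable (μ := P)
  have hmeanX := integrable_empiricalMean_of_map_eq hXae hXlaw hIP
  have hmeanZ := integrable_empiricalMean_of_map_eq hZae hZlaw hIU
  have hEU : ∫ x, ℓ (f x) ∂μU = π * ∫ x, ℓ (f x) ∂μP + (1 - π) * ∫ x, ℓ (f x) ∂μN := by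
    rw [hμU, integral_smul_add_smul_measure hπ0 hπ1' hIP hIN]
  have hdiff : Integrable (fun ω => 2 * π * ((1 / (m : ℝ)) * ∑ j, ℓ (f (Xs j ω)))
      - (1 / (n : ℝ)) * ∑ j, ℓ (f (Zs j ω))) P := (hmeanX.const_mul _).sub hmeanZ
  simp only [hRhat]
  rw [integral_add hdiff (integrable_const _),
    integral_sub (hmeanX.const_mul _) hmeanZ, integral_const_mul,
    integral_empiricalMean_of_map_eq hm hXae hXlaw hIP,
    integral_empiricalMean_of_map_eq hn hZae hZlaw hIU, hEU,
    integral_comp_eq_sub_integral_comp_neg μN hsum (integrable_comp_of_abs_le μN hℓ hB hf.neg),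
    integral_const, probReal_univ, one_smul]
  ring

/-- Unbiasedness of the PU empirical risk estimator.  With unlabeled marginal
`μ_U = π • μ_P + (1 − π) • μ_N`, a bounded measurable loss `ℓ` satisfying the
constant-sum property `ℓ(z) + ℓ(−z) = C`, i.i.d. positives `X_j ∼ μ_P` and i.i.d.
unlabeled points `Z_j ∼ μ_U`, the PU empirical risk
`R̂ = 2π (1/m) Σ_j ℓ(f(X_j)) − (1/n) Σ_j ℓ(f(Z_j)) + (1 − π) C`
satisfies `E[R̂] = π E_{μ_P}[ℓ(f)] + (1 − π) E_{μ_N}[ℓ(−f)]`. -/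
theorem pu_empirical_risk_unbiased
    {X : Type*} [MeasurableSpace X]
    (μP μN : Measure X) [IsProbabilityMeasure μP] [IsProbabilityMeasure μN]
    (π : ℝ) (hπ0 : 0 ≤ π) (hπ1 : π ≤ 1)
    (μU : Measure X)
    (hμU : μU = ENNReal.ofReal π • μP + ENNReal.ofReal (1 - π) • μN)
    (f : X → ℝ) (hf : Measurable f)
    (ℓ : ℝ → ℝ) (hℓ : Measurable ℓ) (B : ℝ) (hB : ∀ z : ℝ, |ℓ z| ≤ B)
    (C : ℝ) (hsum : ∀ z : ℝ, ℓ z + ℓ (-z) = C)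
    {Ω : Type*} [MeasurableSpace Ω] (P : Measure Ω) [IsProbabilityMeasure P]
    (m n : ℕ) (hm : 0 < m) (hn : 0 < n)
    (Xs : Fin m → Ω → X) (Zs : Fin n → Ω → X)
    (hXmeas : ∀ j, Measurable (Xs j)) (hZmeas : ∀ j, Measurable (Zs j))
    (hXlaw : ∀ j, Measure.map (Xs j) P = μP)
    (hZlaw : ∀ j, Measure.map (Zs j) P = μU)
    (hXindep : iIndepFun Xs P)
    (hZindep : iIndepFun Zs P)
    (Rhat : Ω → ℝ)
    (hRhat : Rhat = fun ω =>
      2 * π * ((1 / (m : ℝ)) * ∑ j : Fin m, ℓ (f (Xs j ω)))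
        - (1 / (n : ℝ)) * ∑ j : Fin n, ℓ (f (Zs j ω)) + (1 - π) * C) :
    ∫ ω, Rhat ω ∂P =
      π * ∫ x, ℓ (f x) ∂μP + (1 - π) * ∫ x, ℓ (-f x) ∂μN :=
  pu_empirical_risk_unbiased_general μP μN π hπ0 hπ1 μU hμU f hf ℓ hℓ B hB C hsum P m n hm hn Xs Zs
    hXmeas hZmeas hXlaw hZlaw Rhat hRhat
end
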